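/- arXiv:1706.09358 — 6 statements merged into one kernel-verified Lean document; each statement's English description precedes it below -/
import Mathlib

section
/- Let Λ be a small category with a degree functor d : Λ → ℕ^k, let β be an action of ℤ^l by automorphisms of Λ, and let Γ = Λ ×_β ℤ^l be the crossed-product category with morphisms Λ × ℕ^l and composition (μ,m)(ν,n) := (μ·β_m(ν), m+n). If f : Λ → 𝕋 is a functor satisfying f ∘ β_m = f for all m ∈ ℤ^l, then c_f((μ,m),(ν,n)) := f(ν)^{|m|}, where |m| = Σᵢ mᵢ, is a normalised 𝕋-valued 2-cocycle on Γ. -/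
/-- A small category presented algebraically on its set of morphisms: objects are
identified with identity morphisms, `r`/`s` are the range (codomain) and source
(domain) maps, and `comp lam mu` is the composite `lam ∘ mu`, meaningful when
`s lam = r mu`. -/
structure CategoryData (M : Type*) where
  r : M → M
  s : M → M
  comp : M → M → M
  rr : ∀ lam, r (r lam) = r lam
  sr : ∀ lam, s (r lam) = r lam
  rs : ∀ lam, r (s lam) = s lam
  ss' : ∀ lam, s (s lam) = s lam
  r_comp : ∀ {lam mu}, s lam = r mu → r (comp lam mu) = r lam
  s_comp : ∀ {lam mu}, s lam = r mu → s (comp lam mu) = s mu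
  comp_assoc : ∀ {lam mu nu}, s lam = r mu → s mu = r nu →
      comp (comp lam mu) nu = comp lam (comp mu nu)
  id_comp : ∀ lam, comp (r lam) lam = lam
  comp_id : ∀ lam, comp lam (s lam) = lam

/-- A normalised `𝕋`-valued 2-cocycle on a small category: (C1) the cocycle
identity on composable triples, and (C2) `c(λ, s(λ)) = c(r(λ), λ) = 1`. -/
def IsNormalisedCocycle {M : Type*} (C : CategoryData M) (c : M → M → Circle) : Prop :=
  (∀ lam mu nu, C.s lam = C.r mu → C.s mu = C.r nu →
      c lam mu * c (C.comp lam mu) nu = c lam (C.comp mu nu) * c mu nu) ∧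
  (∀ lam, c lam (C.s lam) = 1) ∧ (∀ lam, c (C.r lam) lam = 1)

/-- `β` is an action of `ℤ^l` by automorphisms of the small category `C`. -/
structure IsCatAction {M : Type*} (C : CategoryData M) {l : ℕ}
    (β : (Fin l → ℤ) → M → M) : Prop where
  map_zero : ∀ mu, β 0 mu = mu
  map_add : ∀ m n mu, β (m + n) mu = β m (β n mu)
  map_r : ∀ m mu, C.r (β m mu) = β m (C.r mu)
  map_s : ∀ m mu, C.s (β m mu) = β m (C.s mu)
  map_comp : ∀ m {mu nu}, C.s mu = C.r nu →
      β m (C.comp mu nu) = C.comp (β m mu) (β m nu)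

/-- The canonical coercion `ℕ^l → ℤ^l`. -/
def natToInt {l : ℕ} (m : Fin l → ℕ) : Fin l → ℤ := fun i => (m i : ℤ)

/-- `Γ` is the crossed-product category `Λ ×_β ℤ^l`: its morphisms are pairs
`(μ, m) ∈ Λ × ℕ^l`, with range `(r(μ), 0)`, source `(β₋ₘ(s(μ)), 0)` and
composition `(μ,m)(ν,n) = (μ·β_m(ν), m + n)`. -/
structure IsCrossedProduct {M : Type*} {l : ℕ} (C : CategoryData M)
    (β : (Fin l → ℤ) → M → M) (Γ : CategoryData (M × (Fin l → ℕ))) : Prop where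
  r_eq : ∀ p : M × (Fin l → ℕ), Γ.r p = (C.r p.1, 0)
  s_eq : ∀ p : M × (Fin l → ℕ), Γ.s p = (β (-(natToInt p.2)) (C.s p.1), 0)
  comp_eq : ∀ p q : M × (Fin l → ℕ), Γ.s p = Γ.r q →
      Γ.comp p q = (C.comp p.1 (β (natToInt p.2) q.1), p.2 + q.2)

/-!
Because `f` is `β`-invariant, it is multiplicative on composites in `Γ`:
`f(μ·β_m(ν)) = f(μ) f(ν)`. As `|m + n| = |m| + |n|`, both sides of the cocycle
identity for `(λ,a), (μ,b), (ν,c)` equal `f(μ)^{|a|} f(ν)^{|a| + |b|}`.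
Normalisation holds because `f` is trivial on identities and the identities of
`Γ` have `ℕ^l`-component `0`.
-/

namespace IsCatAction

variable {M : Type*} {l : ℕ} {C : CategoryData M} {β : (Fin l → ℤ) → M → M}

theorem apply_neg_apply (hβ : IsCatAction C β) (m : Fin l → ℤ) (mu : M) :
    β m (β (-m) mu) = mu := by
  rw [← hβ.map_add, add_neg_cancel, hβ.map_zero]

end IsCatAction

namespace IsCrossedProduct

variable {M : Type*} {l : ℕ} {C : CategoryData M} {β : (Fin l → ℤ) → M → M}
  {Γ : CategoryData (M × (Fin l → ℕ))}

theorem s_fst_eq_r_of_composable (hΓ : IsCrossedProduct C β Γ) (hβ : IsCatAction C β)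
    {p q : M × (Fin l → ℕ)} (hpq : Γ.s p = Γ.r q) :
    C.s p.1 = C.r (β (natToInt p.2) q.1) := by
  have hfst : β (-(natToInt p.2)) (C.s p.1) = C.r q.1 := by
    simpa only [hΓ.s_eq, hΓ.r_eq] using congrArg Prod.fst hpq
  rw [hβ.map_r, ← hfst, hβ.apply_neg_apply]

theorem map_comp_fst (hΓ : IsCrossedProduct C β Γ) (hβ : IsCatAction C β) (f : M → Circle)
    (hf_comp : ∀ {mu nu}, C.s mu = C.r nu → f (C.comp mu nu) = f mu * f nu)
    (hf_inv : ∀ m mu, f (β m mu) = f mu) {p q : M × (Fin l → ℕ)} (hpq : Γ.s p = Γ.r q) :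
    f (Γ.comp p q).1 = f p.1 * f q.1 := by
  rw [hΓ.comp_eq p q hpq, hf_comp (hΓ.s_fst_eq_r_of_composable hβ hpq), hf_inv]

end IsCrossedProduct

theorem CategoryData.map_s_eq_one {M : Type*} (C : CategoryData M) (f : M → Circle)
    (hf_id : ∀ mu, f (C.r mu) = 1) (mu : M) : f (C.s mu) = 1 := by
  rw [← C.rs, hf_id]

theorem crossedProduct_cocycle_from_invariant_functor_general
    {M : Type*} {l : ℕ} (C : CategoryData M)
    -- the action `β` of `ℤ^l` by automorphisms of `Λ`
    (β : (Fin l → ℤ) → M → M) (hβ : IsCatAction C β)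
    -- the crossed-product category `Γ = Λ ×_β ℤ^l`
    (Γ : CategoryData (M × (Fin l → ℕ))) (hΓ : IsCrossedProduct C β Γ)
    -- the functor `f : Λ → 𝕋` with `f ∘ β_m = f`
    (f : M → Circle)
    (hf_comp : ∀ {mu nu}, C.s mu = C.r nu → f (C.comp mu nu) = f mu * f nu)
    (hf_id : ∀ mu, f (C.r mu) = 1)
    (hf_inv : ∀ m mu, f (β m mu) = f mu) :
    IsNormalisedCocycle Γ (fun p q => (f q.1) ^ (∑ i, p.2 i)) := by
  refine ⟨fun lam mu nu hlm hmn => ?_, fun lam => ?_, fun lam => ?_⟩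
  · have hdeg : ∑ i, (Γ.comp lam mu).2 i = ∑ i, lam.2 i + ∑ i, mu.2 i := by
      rw [hΓ.comp_eq lam mu hlm, Pi.add_def, Finset.sum_add_distrib]
    simp only [hdeg, hΓ.map_comp_fst hβ f hf_comp hf_inv hmn, pow_add, mul_pow, mul_assoc]
  · simp only [hΓ.s_eq, hf_inv, C.map_s_eq_one f hf_id, one_pow]
  · simp [hΓ.r_eq]

/-- Let `Λ` be a small category with a degree functor
`d : Λ → ℕ^k`, `β` an action of `ℤ^l` by automorphisms of `Λ`, and
`Γ = Λ ×_β ℤ^l` the crossed-product category. If `f : Λ → 𝕋` is a functor with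
`f ∘ β_m = f` for all `m ∈ ℤ^l`, then `c_f((μ,m),(ν,n)) := f(ν)^{|m|}`, where
`|m| = Σᵢ mᵢ`, is a normalised `𝕋`-valued 2-cocycle on `Γ`. -/
theorem crossedProduct_cocycle_from_invariant_functor
    {M : Type*} {k l : ℕ} (C : CategoryData M)
    -- the degree functor `d : Λ → ℕ^k`
    (d : M → Fin k → ℕ)
    (hd_comp : ∀ {mu nu}, C.s mu = C.r nu → d (C.comp mu nu) = d mu + d nu)
    (hd_r : ∀ mu, d (C.r mu) = 0) (hd_s : ∀ mu, d (C.s mu) = 0)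
    -- the action `β` of `ℤ^l` by automorphisms of `Λ`
    (β : (Fin l → ℤ) → M → M) (hβ : IsCatAction C β)
    (hβbij : ∀ m, Function.Bijective (β m))
    (hβd : ∀ m mu, d (β m mu) = d mu)
    -- the crossed-product category `Γ = Λ ×_β ℤ^l`
    (Γ : CategoryData (M × (Fin l → ℕ))) (hΓ : IsCrossedProduct C β Γ)
    -- the functor `f : Λ → 𝕋` with `f ∘ β_m = f`
    (f : M → Circle)
    (hf_comp : ∀ {mu nu}, C.s mu = C.r nu → f (C.comp mu nu) = f mu * f nu)
    (hf_id : ∀ mu, f (C.r mu) = 1)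
    (hf_inv : ∀ m mu, f (β m mu) = f mu) :
    IsNormalisedCocycle Γ (fun p q => (f q.1) ^ (∑ i, p.2 i)) :=
  crossedProduct_cocycle_from_invariant_functor_general C β hβ Γ hΓ f hf_comp hf_id hf_inv
end

section
/- Let Λ be a small category with degree functor d : Λ → ℕ^k, β an action of ℤ^l by automorphisms of Λ, and Γ = Λ ×_β ℤ^l the crossed-product category. If ω : ℕ^l → 𝕋 is a monoid homomorphism, then c_ω((μ,m),(ν,n)) := ω(m)^{|d(ν)|}, where |p| = Σᵢ pᵢ for p ∈ ℕ^k, is a normalised 𝕋-valued 2-cocycle on Γ. -/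
/-! Both `p ↦ |d(p.1)|` (because `β` preserves degree) and `p ↦ p.2` are functors from `Γ` to
additive monoids, and a functor into a cancellative monoid kills identities. For any two such
functors `D`, `e` and any homomorphism `ω`, both sides of the cocycle identity for
`c(λ, μ) = ω(e λ)^{D μ}` equal `ω(e λ)^{D μ + D ν} ω(e μ)^{D ν}`. -/

namespace CategoryData

variable {M A : Type*} (C : CategoryData M)

def IsAdditive [Add A] (f : M → A) : Prop :=
  ∀ {x y}, C.s x = C.r y → f (C.comp x y) = f x + f y

variable {C}

theorem IsAdditive.map_s [AddLeftCancelMonoid A] {f : M → A} (hf : C.IsAdditive f) (x : M) :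
    f (C.s x) = 0 := by
  have h := hf (C.rs x).symm
  rwa [C.comp_id, left_eq_add] at h

theorem IsAdditive.map_r [AddRightCancelMonoid A] {f : M → A} (hf : C.IsAdditive f) (x : M) :
    f (C.r x) = 0 := by
  have h := hf (C.sr x)
  rwa [C.id_comp, right_eq_add] at h

theorem isNormalisedCocycle_pow [AddRightCancelMonoid A] {D : M → ℕ} {e : M → A}
    (hD : C.IsAdditive D) (he : C.IsAdditive e) {ω : A → Circle}
    (hω : ∀ a b, ω (a + b) = ω a * ω b) :
    IsNormalisedCocycle C (fun x y => ω (e x) ^ D y) := by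
  have hω_zero : ω 0 = 1 := by simpa using hω 0 0
  refine ⟨fun x y z hxy hyz => ?_, fun x => ?_, fun x => ?_⟩ <;> dsimp only
  · rw [he hxy, hD hyz, hω, pow_add, mul_pow, mul_assoc]
  · rw [hD.map_s, pow_zero]
  · rw [he.map_r, hω_zero, one_pow]

end CategoryData

theorem IsCatAction.apply_neg_apply_s2 {M : Type*} {C : CategoryData M} {l : ℕ}
    {β : (Fin l → ℤ) → M → M} (hβ : IsCatAction C β) (m : Fin l → ℤ) (x : M) :
    β m (β (-m) x) = x := by
  rw [← hβ.map_add, add_neg_cancel, hβ.map_zero]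

namespace IsCrossedProduct

variable {M : Type*} {l : ℕ} {C : CategoryData M} {β : (Fin l → ℤ) → M → M}
  {Γ : CategoryData (M × (Fin l → ℕ))}

theorem s_fst_eq_r_fst (hΓ : IsCrossedProduct C β Γ) (hβ : IsCatAction C β)
    {p q : M × (Fin l → ℕ)} (h : Γ.s p = Γ.r q) :
    C.s p.1 = C.r (β (natToInt p.2) q.1) := by
  rw [hΓ.s_eq, hΓ.r_eq, Prod.mk.injEq] at h
  rw [hβ.map_r, ← h.1, hβ.apply_neg_apply_s2]

theorem isAdditive_snd (hΓ : IsCrossedProduct C β Γ) : Γ.IsAdditive Prod.snd := by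
  intro p q h
  rw [hΓ.comp_eq p q h]

theorem isAdditive_fst_comp {A : Type*} [Add A] (hΓ : IsCrossedProduct C β Γ)
    (hβ : IsCatAction C β) {f : M → A} (hf : C.IsAdditive f) (hβf : ∀ m x, f (β m x) = f x) :
    Γ.IsAdditive (fun p => f p.1) := by
  intro p q h
  dsimp only
  rw [hΓ.comp_eq p q h, hf (hΓ.s_fst_eq_r_fst hβ h), hβf]

end IsCrossedProduct

theorem crossedProduct_cocycle_from_monoidHom_general
    {M : Type*} {k l : ℕ} (C : CategoryData M)
    -- the degree functor `d : Λ → ℕ^k`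
    (d : M → Fin k → ℕ)
    (hd_comp : ∀ {mu nu}, C.s mu = C.r nu → d (C.comp mu nu) = d mu + d nu)
    -- the action `β` of `ℤ^l` by degree-preserving automorphisms of `Λ`
    (β : (Fin l → ℤ) → M → M) (hβ : IsCatAction C β)
    (hβd : ∀ m mu, d (β m mu) = d mu)
    -- the crossed-product category `Γ = Λ ×_β ℤ^l`
    (Γ : CategoryData (M × (Fin l → ℕ))) (hΓ : IsCrossedProduct C β Γ)
    -- the monoid homomorphism `ω : ℕ^l → 𝕋`
    (ω : (Fin l → ℕ) → Circle)
    (hω_add : ∀ m n, ω (m + n) = ω m * ω n) :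
    IsNormalisedCocycle Γ (fun p q => (ω p.2) ^ (∑ i, d q.1 i)) := by
  have hd : Γ.IsAdditive (fun p => d p.1) := hΓ.isAdditive_fst_comp hβ hd_comp hβd
  have hD : Γ.IsAdditive (fun p => ∑ i, d p.1 i) := fun h => by
    simp only [hd h, Pi.add_apply, Finset.sum_add_distrib]
  exact CategoryData.isNormalisedCocycle_pow hD hΓ.isAdditive_snd hω_add

/-- Let `Λ` be a small category with degree functor `d : Λ → ℕ^k`,
`β` an action of `ℤ^l` by (degree-preserving) automorphisms of `Λ`, and
`Γ = Λ ×_β ℤ^l` the crossed-product category. If `ω : ℕ^l → 𝕋` is a monoid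
homomorphism, then `c_ω((μ,m),(ν,n)) := ω(m)^{|d(ν)|}`, where `|p| = Σᵢ pᵢ`, is a
normalised `𝕋`-valued 2-cocycle on `Γ`. -/
theorem crossedProduct_cocycle_from_monoidHom
    {M : Type*} {k l : ℕ} (C : CategoryData M)
    -- the degree functor `d : Λ → ℕ^k`
    (d : M → Fin k → ℕ)
    (hd_comp : ∀ {mu nu}, C.s mu = C.r nu → d (C.comp mu nu) = d mu + d nu)
    (hd_r : ∀ mu, d (C.r mu) = 0) (hd_s : ∀ mu, d (C.s mu) = 0)
    -- the action `β` of `ℤ^l` by degree-preserving automorphisms of `Λ`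
    (β : (Fin l → ℤ) → M → M) (hβ : IsCatAction C β)
    (hβbij : ∀ m, Function.Bijective (β m))
    (hβd : ∀ m mu, d (β m mu) = d mu)
    -- the crossed-product category `Γ = Λ ×_β ℤ^l`
    (Γ : CategoryData (M × (Fin l → ℕ))) (hΓ : IsCrossedProduct C β Γ)
    -- the monoid homomorphism `ω : ℕ^l → 𝕋`
    (ω : (Fin l → ℕ) → Circle)
    (hω_zero : ω 0 = 1) (hω_add : ∀ m n, ω (m + n) = ω m * ω n) :
    IsNormalisedCocycle Γ (fun p q => (ω p.2) ^ (∑ i, d q.1 i)) :=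
  crossedProduct_cocycle_from_monoidHom_general C d hd_comp β hβ hβd Γ hΓ ω hω_add
end

section
/- Let E = (E⁰, E¹, r, s) be a topological graph (E⁰, E¹ locally compact Hausdorff, r continuous, s a local homeomorphism). Then the linear span of the set F_E of functions f ∈ C_c(E¹) whose support is contained in an open set U ⊆ E¹ on which s restricts to a homeomorphism onto s(U), is dense in the graph correspondence X(E) with respect to the Hilbert-module norm ‖f‖² = sup_{v ∈ E⁰} Σ_{e ∈ s⁻¹(v)} |f(e)|². -/
open scoped ENNReal

/-!
Every `f ∈ C_c(E¹)` already lies in the span of the `s`-section functions, so the approximation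
is exact: cover the compact support of `f` by finitely many open sets on which `s` is injective
and split `f = ∑ᵢ φᵢ • f` along a subordinate partition of unity.
-/

open Set

section

variable {X : Type*} [TopologicalSpace X]

theorem IsCompact.exists_fin_open_cover_of_locally {K : Set X} {P : Set X → Prop}
    (hK : IsCompact K) (hP : ∀ x, ∃ U, IsOpen U ∧ x ∈ U ∧ P U) :
    ∃ (n : ℕ) (V : Fin n → Set X), (∀ i, IsOpen (V i) ∧ P (V i)) ∧ K ⊆ ⋃ i, V i := by
  choose U hUopen hxU hPU using hP
  obtain ⟨t, ht⟩ := hK.elim_finite_subcover U hUopen fun x _ => mem_iUnion.2 ⟨x, hxU x⟩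
  refine ⟨t.card, fun i => U (t.equivFin.symm i), fun i => ⟨hUopen _, hPU _⟩, fun x hx => ?_⟩
  obtain ⟨y, hy, hxy⟩ := mem_iUnion₂.1 (ht hx)
  exact mem_iUnion.2 ⟨t.equivFin ⟨y, hy⟩, by simpa using hxy⟩

variable [T2Space X] [LocallyCompactSpace X]
  {M : Type*} [AddCommMonoid M] [Module ℝ M] [TopologicalSpace M] [ContinuousSMul ℝ M]

theorem HasCompactSupport.mem_span_of_locally (R : Type*) [Semiring R] [Module R M]
    {P : Set X → Prop} (hP : ∀ x, ∃ U, IsOpen U ∧ x ∈ U ∧ P U)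
    {f : X → M} (hf : Continuous f) (hfc : HasCompactSupport f) :
    f ∈ Submodule.span R {g : X → M | Continuous g ∧ HasCompactSupport g ∧
      ∃ U : Set X, IsOpen U ∧ tsupport g ⊆ U ∧ P U} := by
  obtain ⟨n, V, hV, hcover⟩ := hfc.isCompact.exists_fin_open_cover_of_locally hP
  obtain ⟨φ, hφV, hφsum, -, hφc⟩ :=
    exists_continuous_sum_one_of_isOpen_isCompact (fun i => (hV i).1) hfc hcover
  have hsplit : f = ∑ i, fun x => φ i x • f x := by
    funext x
    by_cases hx : x ∈ tsupport f
    · have hx1 : ∑ i, φ i x = 1 := by simpa using hφsum hx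
      simp [← Finset.sum_smul, hx1]
    · simp [image_eq_zero_of_notMem_tsupport hx]
  rw [hsplit]
  refine Submodule.sum_mem _ fun i _ => Submodule.subset_span ?_
  exact ⟨(φ i).continuous.smul hf, (hφc i).smul_right, V i, (hV i).1,
    (tsupport_smul_subset_left _ _).trans (hφV i), (hV i).2⟩

end

theorem span_sSection_functions_dense_in_graph_correspondence_general
    {E0 E1 : Type} [TopologicalSpace E0] [TopologicalSpace E1]
    [T2Space E1] [LocallyCompactSpace E1]
    (s : E1 → E0)
    (hs : IsLocalHomeomorph s)
    (f : E1 → ℂ) (hf : Continuous f) (hfc : HasCompactSupport f)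
    (ε : ℝ) :
    ∃ g ∈ Submodule.span ℂ {g : E1 → ℂ | Continuous g ∧ HasCompactSupport g ∧
        ∃ U : Set E1, IsOpen U ∧ tsupport g ⊆ U ∧ Set.InjOn s U},
      (⨆ v : E0, ∑' e : {e : E1 // s e = v}, ((‖f e.1 - g e.1‖₊ : ℝ≥0∞)) ^ 2)
        ≤ ENNReal.ofReal (ε ^ 2) :=
  ⟨f, hfc.mem_span_of_locally ℂ hs.isLocallyInjective hf, by simp⟩

/-- Let `E = (E⁰, E¹, r, s)` be a topological graph (`E⁰`, `E¹`
locally compact Hausdorff, `r` continuous, `s` a local homeomorphism).  Then the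
linear span of the set `F_E` of functions `f ∈ C_c(E¹)` whose support is an
`s`-section (i.e. is contained in an open set on which `s` is injective, hence a
homeomorphism onto its image) is dense in the graph correspondence `X(E)` (the
completion of `C_c(E¹)`) with respect to the Hilbert-module norm
`‖f‖² = sup_{v ∈ E⁰} Σ_{e ∈ s⁻¹(v)} |f(e)|²`; equivalently, every `f ∈ C_c(E¹)`
can be approximated in this norm by elements of `span F_E`. -/
theorem span_sSection_functions_dense_in_graph_correspondence
    {E0 E1 : Type} [TopologicalSpace E0] [TopologicalSpace E1]
    [T2Space E0] [T2Space E1] [LocallyCompactSpace E0] [LocallyCompactSpace E1]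
    (r : E1 → E0) (s : E1 → E0)
    (hr : Continuous r) (hs : IsLocalHomeomorph s)
    (f : E1 → ℂ) (hf : Continuous f) (hfc : HasCompactSupport f)
    (ε : ℝ) (hε : 0 < ε) :
    ∃ g ∈ Submodule.span ℂ {g : E1 → ℂ | Continuous g ∧ HasCompactSupport g ∧
        ∃ U : Set E1, IsOpen U ∧ tsupport g ⊆ U ∧ Set.InjOn s U},
      (⨆ v : E0, ∑' e : {e : E1 // s e = v}, ((‖f e.1 - g e.1‖₊ : ℝ≥0∞)) ^ 2)
        ≤ ENNReal.ofReal (ε ^ 2) :=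
  span_sSection_functions_dense_in_graph_correspondence_general s hs f hf hfc ε
end

section
/- Let Λ be a proper, source-free topological k-graph. For each m, n ∈ ℕ^k with m ≤ n, the map τ_{m,n} : Λ^n → Λ^{n-m} defined by τ_{m,n}(λ) := λ(m,n) (the middle factorisation segment of λ of degree n−m starting at position m) is a local homeomorphism. -/
/-- A topological `k`-graph (Yeend): a small category, presented algebraically on
its (second-countable, locally compact, Hausdorff) space of morphisms with
objects identified with identity morphisms, together with a continuous degree
functor `d : Λ → ℕ^k` satisfying the unique factorisation property.  The range
map is continuous, the source map is a local homeomorphism, and composition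
(defined on the set of composable pairs) is continuous and open. -/
structure TopKGraph (k : ℕ) where
  M : Type
  ts : TopologicalSpace M
  t2 : @T2Space M ts
  lc : @LocallyCompactSpace M ts
  sc : @SecondCountableTopology M ts
  r : M → M
  s : M → M
  comp : M → M → M
  d : M → Fin k → ℕ
  rr : ∀ lam, r (r lam) = r lam
  sr : ∀ lam, s (r lam) = r lam
  rs : ∀ lam, r (s lam) = s lam
  ss' : ∀ lam, s (s lam) = s lam
  r_comp : ∀ {lam mu}, s lam = r mu → r (comp lam mu) = r lam
  s_comp : ∀ {lam mu}, s lam = r mu → s (comp lam mu) = s mu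
  comp_assoc : ∀ {lam mu nu}, s lam = r mu → s mu = r nu →
      comp (comp lam mu) nu = comp lam (comp mu nu)
  id_comp : ∀ lam, comp (r lam) lam = lam
  comp_id : ∀ lam, comp lam (s lam) = lam
  d_comp : ∀ {lam mu}, s lam = r mu → d (comp lam mu) = d lam + d mu
  d_r : ∀ lam, d (r lam) = 0
  d_s : ∀ lam, d (s lam) = 0
  continuous_r : @Continuous M M ts ts r
  continuous_s : @Continuous M M ts ts s
  isLocalHomeomorph_s : @IsLocalHomeomorph M M ts ts s
  continuousOn_comp : @ContinuousOn (M × M) M (@instTopologicalSpaceProd M M ts ts) ts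
      (fun p => comp p.1 p.2) {p | s p.1 = r p.2}
  isOpenMap_comp : ∀ V : Set (M × M), @IsOpen (M × M) (@instTopologicalSpaceProd M M ts ts) V →
      @IsOpen M ts ((fun p : M × M => comp p.1 p.2) '' (V ∩ {p | s p.1 = r p.2}))
  isOpen_deg : ∀ n : Fin k → ℕ, @IsOpen M ts {lam | d lam = n}
  factor : ∀ (lam : M) (m n : Fin k → ℕ), d lam = m + n →
      ∃! p : M × M, s p.1 = r p.2 ∧ comp p.1 p.2 = lam ∧ d p.1 = m ∧ d p.2 = n

attribute [instance] TopKGraph.ts TopKGraph.t2 TopKGraph.lc TopKGraph.sc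

variable {k : ℕ}

/-- An `s`-section: a set contained in an open set on which the source map is
injective (equivalently, since `s` is a local homeomorphism, on which `s`
restricts to a homeomorphism onto its image). -/
def TopKGraph.IsSSection (G : TopKGraph k) (W : Set G.M) : Prop :=
  ∃ U : Set G.M, IsOpen U ∧ W ⊆ U ∧ Set.InjOn G.s U

/-- A topological `k`-graph is proper if, for each `m ∈ ℕ^k`, the preimage under
`r|_{Λ^m}` of any compact set is compact. -/
def TopKGraph.Proper (G : TopKGraph k) : Prop :=
  ∀ (m : Fin k → ℕ) (K : Set G.M), IsCompact K →
    IsCompact {lam : G.M | G.d lam = m ∧ G.r lam ∈ K}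

/-- A topological `k`-graph is source-free if `vΛ^{e_i} ≠ ∅` for every vertex `v`
and every `i`. -/
def TopKGraph.SourceFree (G : TopKGraph k) : Prop :=
  ∀ v : G.M, G.r v = v → ∀ i : Fin k,
    ∃ lam : G.M, G.d lam = Pi.single i 1 ∧ G.r lam = v

/-- A normalised `𝕋`-valued 2-cocycle on a topological `k`-graph. -/
def TopKGraph.IsCocycle (G : TopKGraph k) (c : G.M → G.M → Circle) : Prop :=
  (∀ lam mu nu, G.s lam = G.r mu → G.s mu = G.r nu →
      c lam mu * c (G.comp lam mu) nu = c lam (G.comp mu nu) * c mu nu) ∧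
  (∀ lam, c lam (G.s lam) = 1) ∧ (∀ lam, c (G.r lam) lam = 1)

/-- A continuous normalised `𝕋`-valued 2-cocycle on a topological `k`-graph:
normalised, satisfies the cocycle identity, and is continuous on the set of
composable pairs. -/
def TopKGraph.IsContinuousCocycle (G : TopKGraph k) (c : G.M → G.M → Circle) : Prop :=
  G.IsCocycle c ∧
    ContinuousOn (fun p : G.M × G.M => c p.1 p.2) {p | G.s p.1 = G.r p.2}
open scoped ENNReal ComplexConjugate

/-- The unique factorisation `lam = p.1 ⬝ p.2` of a path `lam` with `d(p.1) = m`
(meaningful whenever `m ≤ d lam`, by the unique factorisation property); thus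
`(pathFac G m lam).1 = λ(0,m)` and, for `lam ∈ Λ^n`, `(pathFac G m lam).2 = λ(m,n)`. -/
noncomputable def TopKGraph.pathFac (G : TopKGraph k) (m : Fin k → ℕ) (lam : G.M) :
    G.M × G.M :=
  letI := Classical.propDecidable; if h : ∃ p : G.M × G.M, G.s p.1 = G.r p.2 ∧ G.comp p.1 p.2 = lam ∧
      G.d p.1 = m ∧ G.d p.2 = G.d lam - m then h.choose else (lam, lam)

/-- An infinite path in `Λ`: a degree-preserving functor `x : Ω_k → Λ`, recorded
by its segments `x(m,n) ∈ Λ^{n-m}` for `m ≤ n` in `ℕ^k`. -/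
structure TopKGraph.InfPath (G : TopKGraph k) where
  seg : (Fin k → ℕ) → (Fin k → ℕ) → G.M
  d_seg : ∀ {m n : Fin k → ℕ}, m ≤ n → G.d (seg m n) = n - m
  seg_id : ∀ m : Fin k → ℕ, seg m m = G.r (seg m m)
  s_seg : ∀ {m n p : Fin k → ℕ}, m ≤ n → n ≤ p → G.s (seg m n) = G.r (seg n p)
  comp_seg : ∀ {m n p : Fin k → ℕ}, m ≤ n → n ≤ p →
      G.comp (seg m n) (seg n p) = seg m p

/-- The cylinder set `Z(U) = {x ∈ Λ^∞ : x(0,n) ∈ U for some n}`. -/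
def TopKGraph.cyl (G : TopKGraph k) (U : Set G.M) : Set G.InfPath :=
  {x | ∃ n : Fin k → ℕ, x.seg 0 n ∈ U}

/-- The topology on the infinite-path space `Λ^∞` is generated by the cylinder
sets `Z(U)` of open subsets `U` of the `Λ^n`, `n ∈ ℕ^k`. -/
instance TopKGraph.instTopInfPath (G : TopKGraph k) : TopologicalSpace G.InfPath :=
  TopologicalSpace.generateFrom
    {S | ∃ (n : Fin k → ℕ) (U : Set G.M), IsOpen U ∧ (∀ lam ∈ U, G.d lam = n) ∧
      S = G.cyl U}

/-- The shift map `T^p : Λ^∞ → Λ^∞`, `T^p(x)(m,n) = x(m+p, n+p)`. -/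
def TopKGraph.shift (G : TopKGraph k) (p : Fin k → ℕ) (x : G.InfPath) : G.InfPath where
  seg m n := x.seg (m + p) (n + p)
  d_seg := by
    intro m n h
    rw [x.d_seg (add_le_add h (le_refl p))]
    funext i
    simp only [Pi.sub_apply, Pi.add_apply]
    omega
  seg_id m := x.seg_id (m + p)
  s_seg := fun h1 h2 => x.s_seg (add_le_add h1 (le_refl p)) (add_le_add h2 (le_refl p))
  comp_seg := fun h1 h2 => x.comp_seg (add_le_add h1 (le_refl p)) (add_le_add h2 (le_refl p))

/-!
Write `λ = μν` with `d(μ) = m`. The source map has a local inverse `e⁻¹` near `μ`, and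
`σ(ν') = e⁻¹(r ν') ν'` is defined on the open set of `ν' ∈ Λ^{n-m}` with `r ν'` in the range
of `e` restricted to `Λ^m`. There `σ` is continuous, and open because composition is open;
unique factorisation makes `τ_{m,n}` a left inverse of `σ`, so `σ` is injective and `τ_{m,n}`
is a local homeomorphism on the open image of `σ`, which contains `λ = σ(ν)`.
-/

theorem IsOpen.isLocalHomeomorphOn_of_injOn {X Y : Type*} [TopologicalSpace X]
    [TopologicalSpace Y] {f : X → Y} {s : Set X} (hs : IsOpen s) (hc : ContinuousOn f s)
    (hi : s.InjOn f) (ho : IsOpenMap (s.domRestrict f)) : IsLocalHomeomorphOn f s :=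
  (isLocalHomeomorphOn_iff_isOpenEmbedding_restrict s).2 fun _ hx =>
    ⟨s, hs.mem_nhds hx, .of_continuous_injective_isOpenMap hc.domRestrict
      (Set.injOn_iff_injective.1 hi) ho⟩

namespace TopKGraph

variable (G : TopKGraph k)

theorem pathFac_comp {mu nu : G.M} (h : G.s mu = G.r nu) :
    G.pathFac (G.d mu) (G.comp mu nu) = (mu, nu) := by
  have hd : G.d (G.comp mu nu) - G.d mu = G.d nu := by rw [G.d_comp h, add_tsub_cancel_left]
  have hex : ∃ q : G.M × G.M, G.s q.1 = G.r q.2 ∧ G.comp q.1 q.2 = G.comp mu nu ∧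
      G.d q.1 = G.d mu ∧ G.d q.2 = G.d (G.comp mu nu) - G.d mu :=
    ⟨(mu, nu), h, rfl, rfl, hd.symm⟩
  obtain ⟨q, -, huniq⟩ := G.factor _ _ _ (G.d_comp h)
  obtain ⟨h1, h2, h3, h4⟩ := hex.choose_spec
  rw [pathFac, dif_pos hex]
  exact (huniq _ ⟨h1, h2, h3, h4.trans hd⟩).trans (huniq (mu, nu) ⟨h, rfl, rfl, rfl⟩).symm

def prependLocalSection (e : OpenPartialHomeomorph G.M G.M) (nu : G.M) : G.M :=
  G.comp (e.symm (G.r nu)) nu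

section LocalSection

variable {G} {e : OpenPartialHomeomorph G.M G.M} (hse : Set.EqOn G.s e e.source)
include hse

theorem s_symm_apply {y : G.M} (hy : y ∈ e.target) : G.s (e.symm y) = y :=
  (hse (e.map_target hy)).trans (e.right_inv hy)

theorem image_prependLocalSection {A : Set G.M} (hA : Set.MapsTo G.r A e.target) :
    G.prependLocalSection e '' A =
      (fun q : G.M × G.M => G.comp q.1 q.2) '' (e.source ×ˢ A ∩ {q | G.s q.1 = G.r q.2}) := by
  ext lam
  constructor
  · rintro ⟨nu, hnu, rfl⟩
    exact ⟨(e.symm (G.r nu), nu), ⟨⟨e.map_target (hA hnu), hnu⟩, s_symm_apply hse (hA hnu)⟩, rfl⟩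
  · rintro ⟨⟨mu, nu⟩, ⟨⟨hmu, hnu⟩, hc⟩, rfl⟩
    have hsymm : e.symm (G.r nu) = mu := by
      rw [← show G.s mu = G.r nu from hc, hse hmu, e.left_inv hmu]
    exact ⟨nu, hnu, by rw [prependLocalSection, hsymm]⟩

theorem isOpenMap_domRestrict_prependLocalSection {W : Set G.M} (hW : IsOpen W)
    (hWr : Set.MapsTo G.r W e.target) : IsOpenMap (W.domRestrict (G.prependLocalSection e)) := by
  intro O hO
  rw [Set.domRestrict_eq, Set.image_comp,
    image_prependLocalSection hse (hWr.mono_left (Subtype.coe_image_subset W O))]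
  exact G.isOpenMap_comp _ (e.open_source.prod (hW.isOpenMap_subtype_val O hO))

theorem continuousOn_prependLocalSection :
    ContinuousOn (G.prependLocalSection e) (G.r ⁻¹' e.target) :=
  G.continuousOn_comp.comp
    ((e.continuousOn_symm.comp G.continuous_r.continuousOn fun _ h => h).prodMk continuousOn_id)
    fun _ h => s_symm_apply hse h

theorem pathFac_snd_prependLocalSection {nu : G.M} (hnu : G.r nu ∈ e.target) :
    (G.pathFac (G.d (e.symm (G.r nu))) (G.prependLocalSection e nu)).2 = nu := by
  rw [prependLocalSection, G.pathFac_comp (s_symm_apply hse hnu)]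

end LocalSection

theorem isLocalHomeomorphOn_pathFac_snd (m p : Fin k → ℕ) :
    IsLocalHomeomorphOn (fun lam => (G.pathFac m lam).2) {lam | G.d lam = m + p} := by
  intro lam hlam
  obtain ⟨⟨mu, nu⟩, ⟨hc, rfl, rfl, hnu⟩, -⟩ := G.factor lam _ p hlam
  obtain ⟨e, hmu, hse⟩ := G.isLocalHomeomorph_s mu
  have hse' : Set.EqOn G.s e e.source := fun x _ => congrFun hse x
  set W := {nu' | G.d nu' = p} ∩ G.r ⁻¹' (e.target ∩ e.symm ⁻¹' {mu' | G.d mu' = G.d mu})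
  have hW : IsOpen W := (G.isOpen_deg p).inter
    ((e.isOpen_inter_preimage_symm (G.isOpen_deg _)).preimage G.continuous_r)
  have hWr : Set.MapsTo G.r W e.target := fun _ h => h.2.1
  have hsymm : e.symm (G.r nu) = mu := by
    rw [← show G.s mu = G.r nu from hc, hse, e.left_inv hmu]
  have hnuW : nu ∈ W := ⟨hnu, by rw [← hc, hse]; exact e.map_source hmu, by
    rw [Set.mem_preimage, hsymm]; rfl⟩
  have hleft : Set.LeftInvOn (fun lam => (G.pathFac (G.d mu) lam).2) (G.prependLocalSection e) W :=
    fun nu' h => by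
      have := pathFac_snd_prependLocalSection hse' h.2.1
      rwa [h.2.2] at this
  have hσ : IsLocalHomeomorphOn (G.prependLocalSection e) W :=
    hW.isLocalHomeomorphOn_of_injOn
      ((continuousOn_prependLocalSection hse').mono fun _ h => h.2.1)
      hleft.injOn (isOpenMap_domRestrict_prependLocalSection hse' hW hWr)
  have hτσ : IsLocalHomeomorphOn
      ((fun lam => (G.pathFac (G.d mu) lam).2) ∘ G.prependLocalSection e) W :=
    IsLocalHomeomorphOn.mk _ _ fun _ h => ⟨OpenPartialHomeomorph.ofSet W hW, h, hleft⟩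
  refine hτσ.of_comp_right hσ _ ⟨nu, hnuW, ?_⟩
  rw [prependLocalSection, hsymm]

end TopKGraph

theorem tau_isLocalHomeomorph_general {k : ℕ} (G : TopKGraph k) (m n : Fin k → ℕ) (hmn : m ≤ n) :
    IsLocalHomeomorph (fun lam : {lam : G.M // G.d lam = n} => (G.pathFac m lam.1).2) := by
  have hτ := G.isLocalHomeomorphOn_pathFac_snd m (n - m)
  rw [add_tsub_cancel_of_le hmn] at hτ
  exact isLocalHomeomorph_iff_isLocalHomeomorphOn_univ.2 <|
    hτ.comp (G.isOpen_deg n).isOpenEmbedding_subtypeVal.isLocalHomeomorph.isLocalHomeomorphOn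
      fun x _ => x.2

/-- Let `Λ` be a proper, source-free topological `k`-graph.  For
`m ≤ n` in `ℕ^k`, the map `τ_{m,n} : Λ^n → Λ^{n-m}`, `τ_{m,n}(λ) := λ(m,n)` (the
final segment of degree `n-m` in the factorisation `λ = λ(0,m)λ(m,n)`), is a
local homeomorphism (onto the clopen subset `Λ^{n-m}` of `Λ`). -/
theorem tau_isLocalHomeomorph {k : ℕ} (G : TopKGraph k)
    (hP : G.Proper) (hSF : G.SourceFree) (m n : Fin k → ℕ) (hmn : m ≤ n) :
    IsLocalHomeomorph (fun lam : {lam : G.M // G.d lam = n} => (G.pathFac m lam.1).2) :=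
  tau_isLocalHomeomorph_general G m n hmn
end

section
/- Let Λ be a proper, source-free topological k-graph. For each m, n ∈ ℕ^k with m ≤ n, the map ρ_{m,n} : Λ^n → Λ^m given by ρ_{m,n}(λ) := λ(0,m) is continuous and proper (preimages of compact sets are compact). -/
variable {k : ℕ}

open scoped ENNReal ComplexConjugate

/-
Unique factorisation makes composition a continuous bijection from the composable pairs of
degrees `(m, n - m)` onto `Λ^n`, whose inverse is `λ ↦ (λ(0,m), λ(m,n))`; composition is open,
so this bijection is a homeomorphism and `ρ_{m,n}` is continuous. Since `r(λ(0,m)) = r(λ)`,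
the preimage of a compact `K` is a closed subset of `Λ^n ∩ r⁻¹(r(K))`, which is compact
because `Λ` is proper.
-/

namespace TopKGraph

variable (G : TopKGraph k)

def ComposablePairs (m p : Fin k → ℕ) : Set (G.M × G.M) :=
  {q | G.s q.1 = G.r q.2 ∧ G.d q.1 = m ∧ G.d q.2 = p}

variable {G} {m n p : Fin k → ℕ}

lemma pathFac_spec {lam : G.M} (hm : m ≤ G.d lam) :
    G.s (G.pathFac m lam).1 = G.r (G.pathFac m lam).2 ∧
    G.comp (G.pathFac m lam).1 (G.pathFac m lam).2 = lam ∧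
    G.d (G.pathFac m lam).1 = m ∧ G.d (G.pathFac m lam).2 = G.d lam - m := by
  obtain ⟨q, hq, -⟩ := G.factor lam m (G.d lam - m) (add_tsub_cancel_of_le hm).symm
  have h : ∃ q : G.M × G.M, G.s q.1 = G.r q.2 ∧ G.comp q.1 q.2 = lam ∧
      G.d q.1 = m ∧ G.d q.2 = G.d lam - m := ⟨q, hq⟩
  rw [pathFac, dif_pos h]
  exact h.choose_spec

lemma pathFac_comp_s7 {a b : G.M} (hab : G.s a = G.r b) (ha : G.d a = m) :
    G.pathFac m (G.comp a b) = (a, b) := by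
  have hd : G.d (G.comp a b) = m + G.d b := by rw [G.d_comp hab, ha]
  obtain ⟨q, -, huniq⟩ := G.factor _ m (G.d b) hd
  have hspec := pathFac_spec (hd ▸ le_self_add : m ≤ G.d (G.comp a b))
  rw [hd, add_tsub_cancel_left] at hspec
  exact (huniq _ hspec).trans (huniq (a, b) ⟨hab, rfl, ha, rfl⟩).symm

lemma r_pathFac_fst {lam : G.M} (hm : m ≤ G.d lam) : G.r (G.pathFac m lam).1 = G.r lam := by
  obtain ⟨hs, hcomp, -, -⟩ := pathFac_spec hm
  rw [← G.r_comp hs, hcomp]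

variable (G)

noncomputable def compEquiv (hmpn : m + p = n) :
    G.ComposablePairs m p ≃ {lam : G.M // G.d lam = n} where
  toFun q := ⟨G.comp q.1.1 q.1.2, by rw [G.d_comp q.2.1, q.2.2.1, q.2.2.2, hmpn]⟩
  invFun lam := ⟨G.pathFac m lam.1, by
    obtain ⟨hs, -, hm, hp⟩ := pathFac_spec ((le_self_add.trans_eq hmpn).trans_eq lam.2.symm)
    exact ⟨hs, hm, by rw [hp, lam.2, ← hmpn, add_tsub_cancel_left]⟩⟩
  left_inv q := Subtype.ext (pathFac_comp_s7 q.2.1 q.2.2.1)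
  right_inv lam := Subtype.ext (pathFac_spec ((le_self_add.trans_eq hmpn).trans_eq lam.2.symm)).2.1

lemma continuous_compEquiv (hmpn : m + p = n) : Continuous (G.compEquiv hmpn) :=
  continuous_induced_rng.2 <|
    G.continuousOn_comp.comp_continuous continuous_subtype_val fun q => q.2.1

lemma isOpenMap_compEquiv (hmpn : m + p = n) : IsOpenMap (G.compEquiv hmpn) := by
  refine IsOpenMap.subtype_mk ?_ _
  rintro _ ⟨V, hV, rfl⟩
  have hdeg : IsOpen {q : G.M × G.M | G.d q.1 = m ∧ G.d q.2 = p} :=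
    ((G.isOpen_deg m).preimage continuous_fst).inter ((G.isOpen_deg p).preimage continuous_snd)
  convert G.isOpenMap_comp _ (hV.inter hdeg) using 1
  ext lam
  constructor
  · rintro ⟨q, hqV, rfl⟩
    exact ⟨q.1, ⟨⟨hqV, q.2.2⟩, q.2.1⟩, rfl⟩
  · rintro ⟨q, ⟨⟨hqV, hq⟩, hqc⟩, rfl⟩
    exact ⟨⟨q, hqc, hq⟩, hqV, rfl⟩

noncomputable def compHomeomorph (hmpn : m + p = n) :
    G.ComposablePairs m p ≃ₜ {lam : G.M // G.d lam = n} :=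
  (G.compEquiv hmpn).toHomeomorphOfContinuousOpen (G.continuous_compEquiv hmpn)
    (G.isOpenMap_compEquiv hmpn)

lemma continuous_pathFac_fst (hmn : m ≤ n) :
    Continuous fun lam : {lam : G.M // G.d lam = n} => (G.pathFac m lam.1).1 :=
  continuous_fst.comp <| continuous_subtype_val.comp
    (G.compHomeomorph (add_tsub_cancel_of_le hmn)).symm.continuous

lemma isCompact_setOf_r_mem (hP : G.Proper) {L : Set G.M} (hL : IsCompact L) :
    IsCompact {lam : {lam : G.M // G.d lam = n} | G.r lam.1 ∈ L} := by
  rw [Subtype.isCompact_iff]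
  have := Subtype.image_preimage_coe {lam | G.d lam = n} (G.r ⁻¹' L)
  exact this ▸ hP n L hL

lemma isCompact_preimage_pathFac_fst (hP : G.Proper) (hmn : m ≤ n) {K : Set G.M}
    (hK : IsCompact K) :
    IsCompact {lam : {lam : G.M // G.d lam = n} | (G.pathFac m lam.1).1 ∈ K} :=
  (G.isCompact_setOf_r_mem hP (hK.image G.continuous_r)).of_isClosed_subset
    (hK.isClosed.preimage (G.continuous_pathFac_fst hmn)) fun lam hlam =>
      ⟨_, hlam, r_pathFac_fst (hmn.trans_eq lam.2.symm)⟩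

end TopKGraph

theorem rho_continuous_and_proper_general {k : ℕ} (G : TopKGraph k)
    (hP : G.Proper) (m n : Fin k → ℕ) (hmn : m ≤ n) :
    Continuous (fun lam : {lam : G.M // G.d lam = n} => (G.pathFac m lam.1).1) ∧
    ∀ K : Set G.M, IsCompact K →
      IsCompact {lam : {lam : G.M // G.d lam = n} | (G.pathFac m lam.1).1 ∈ K} :=
  ⟨G.continuous_pathFac_fst hmn, fun _ hK => G.isCompact_preimage_pathFac_fst hP hmn hK⟩

/-- Let `Λ` be a proper, source-free topological `k`-graph.  For
`m ≤ n` in `ℕ^k`, the map `ρ_{m,n} : Λ^n → Λ^m`, `ρ_{m,n}(λ) := λ(0,m)`, is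
continuous and proper (preimages of compact sets are compact). -/
theorem rho_continuous_and_proper {k : ℕ} (G : TopKGraph k)
    (hP : G.Proper) (hSF : G.SourceFree) (m n : Fin k → ℕ) (hmn : m ≤ n) :
    Continuous (fun lam : {lam : G.M // G.d lam = n} => (G.pathFac m lam.1).1) ∧
    ∀ K : Set G.M, IsCompact K →
      IsCompact {lam : {lam : G.M // G.d lam = n} | (G.pathFac m lam.1).1 ∈ K} :=
  rho_continuous_and_proper_general G hP m n hmn
end

section
/- Let Λ be a proper, source-free topological k-graph, A a locally compact group, and f : Λ → A a continuous functor. Then the skew-product topological k-graph Λ ×_f A is proper and source-free. -/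
variable {k : ℕ}

open scoped ENNReal ComplexConjugate

namespace TopKGraph

variable {G : TopKGraph k}

theorem Proper.isProperMap_r_restrict (hP : G.Proper) (m : Fin k → ℕ) :
    IsProperMap fun lam : {lam : G.M // G.d lam = m} => G.r lam := by
  refine isProperMap_iff_isCompact_preimage.2 ⟨G.continuous_r.comp continuous_subtype_val, ?_⟩
  intro K hK
  change IsCompact ((↑) ⁻¹' (G.r ⁻¹' K) : Set {lam : G.M // G.d lam = m})
  rw [Subtype.isCompact_iff, Set.image_preimage_eq_inter_range,
    Subtype.range_coe_subtype, Set.inter_comm]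
  exact hP m K hK

theorem Proper.isCompact_skewProduct_r_preimage (hP : G.Proper) {A : Type*} [TopologicalSpace A]
    (m : Fin k → ℕ) {K : Set (G.M × A)} (hK : IsCompact K) :
    IsCompact {p : G.M × A | G.d p.1 = m ∧ (G.r p.1, p.2) ∈ K} := by
  have hprop := (hP.isProperMap_r_restrict m).prodMap (isProperMap_id (X := A))
  convert (hprop.isCompact_preimage hK).image
    (continuous_subtype_val.prodMap continuous_id) using 1
  ext ⟨lam, a⟩
  constructor
  · rintro ⟨hd, hr⟩
    exact ⟨(⟨lam, hd⟩, a), hr, rfl⟩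
  · rintro ⟨⟨⟨lam', hd⟩, a'⟩, hr, heq⟩
    obtain ⟨rfl, rfl⟩ := Prod.mk.inj heq
    exact ⟨hd, hr⟩

theorem SourceFree.skewProduct (hSF : G.SourceFree) {A : Type*} (v : G.M × A) (hv : G.r v.1 = v.1)
    (i : Fin k) : ∃ p : G.M × A, G.d p.1 = Pi.single i 1 ∧ (G.r p.1, p.2) = v := by
  obtain ⟨lam, hd, hr⟩ := hSF v.1 hv i
  exact ⟨(lam, v.2), hd, by rw [hr]⟩

end TopKGraph

theorem skewProduct_proper_sourceFree_general {k : ℕ} (G : TopKGraph k)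
    (hP : G.Proper) (hSF : G.SourceFree)
    (A : Type) [TopologicalSpace A] :
    -- the skew product is proper:
    (∀ (m : Fin k → ℕ) (K : Set (G.M × A)), IsCompact K →
      IsCompact {p : G.M × A | G.d p.1 = m ∧ (G.r p.1, p.2) ∈ K}) ∧
    -- and source-free:
    (∀ v : G.M × A, G.r v.1 = v.1 → ∀ i : Fin k,
      ∃ p : G.M × A, G.d p.1 = Pi.single i 1 ∧ (G.r p.1, p.2) = v) :=
  ⟨fun m _ hK => hP.isCompact_skewProduct_r_preimage m hK,
    fun v hv i => hSF.skewProduct v hv i⟩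

/-- Let `Λ` be a proper, source-free topological `k`-graph, `A`
a locally compact group, and `f : Λ → A` a continuous functor.  Then the
skew-product topological `k`-graph `Λ ×_f A` — with morphisms `Λ × A`, range
`r(μ,a) = (r(μ),a)`, source `s(μ,a) = (s(μ), a·f(μ))` and degree
`d(μ,a) = d(μ)` — is proper and source-free. -/
theorem skewProduct_proper_sourceFree {k : ℕ} (G : TopKGraph k)
    (hP : G.Proper) (hSF : G.SourceFree)
    (A : Type) [Group A] [TopologicalSpace A] [IsTopologicalGroup A]
    [T2Space A] [LocallyCompactSpace A]
    (f : G.M → A) (hf_cont : Continuous f)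
    (hf_comp : ∀ {mu nu}, G.s mu = G.r nu → f (G.comp mu nu) = f mu * f nu)
    (hf_id : ∀ mu, f (G.r mu) = 1) :
    -- the skew product is proper:
    (∀ (m : Fin k → ℕ) (K : Set (G.M × A)), IsCompact K →
      IsCompact {p : G.M × A | G.d p.1 = m ∧ (G.r p.1, p.2) ∈ K}) ∧
    -- and source-free:
    (∀ v : G.M × A, G.r v.1 = v.1 → ∀ i : Fin k,
      ∃ p : G.M × A, G.d p.1 = Pi.single i 1 ∧ (G.r p.1, p.2) = v) :=
  skewProduct_proper_sourceFree_general G hP hSF A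
end
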